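/- arXiv:1512.06770 — 6 statements merged into one kernel-verified Lean document; each statement's English description precedes it below -/
import Mathlib

section
/- Let G and H be groups equipped with a matched pair structure (▷, ◁). Then the set G × H with multiplication (g₁,h₁)(g₂,h₂) = (g₁(h₁ ▷ g₂), (h₁ ◁ g₂)h₂) is a group, with identity element (1_G, 1_H) and with the inverse of (g,h) given by (h⁻¹ ▷ g⁻¹, h⁻¹ ◁ g⁻¹). -/
/-- A matched pair structure on a pair of groups `G`, `H`:
a left action-like map `act = ▷ : H → G → G` and a right action-like map
`coact = ◁ : H → G → H` satisfying the matched pair compatibility conditions. -/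
structure MatchedPair (G H : Type*) [Group G] [Group H] where
  act : H → G → G
  coact : H → G → H
  act_mul : ∀ (h₁ h₂ : H) (g : G), act (h₁ * h₂) g = act h₁ (act h₂ g)
  act_one : ∀ g : G, act 1 g = g
  coact_mul : ∀ (h : H) (g₁ g₂ : G), coact h (g₁ * g₂) = coact (coact h g₁) g₂
  coact_one : ∀ h : H, coact h 1 = h
  act_compat : ∀ (h : H) (g₁ g₂ : G),
    act h (g₁ * g₂) = act h g₁ * act (coact h g₁) g₂
  coact_compat : ∀ (h₁ h₂ : H) (g : G),
    coact (h₁ * h₂) g = coact h₁ (act h₂ g) * coact h₂ g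

namespace MatchedPair

variable {G H : Type*} [Group G] [Group H] (mp : MatchedPair G H)

theorem act_one_right (h : H) : mp.act h 1 = 1 := by
  have h_idem := mp.act_compat h 1 1
  rw [mul_one, mp.coact_one] at h_idem
  exact left_eq_mul.mp h_idem

theorem coact_one_left (g : G) : mp.coact 1 g = 1 := by
  have h_idem := mp.coact_compat 1 1 g
  rw [mul_one, mp.act_one] at h_idem
  exact left_eq_mul.mp h_idem

def prodMul (p q : G × H) : G × H :=
  (p.1 * mp.act p.2 q.1, mp.coact p.2 q.1 * q.2)

def prodInv (p : G × H) : G × H :=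
  (mp.act p.2⁻¹ p.1⁻¹, mp.coact p.2⁻¹ p.1⁻¹)

theorem prodMul_assoc (a b c : G × H) :
    mp.prodMul (mp.prodMul a b) c = mp.prodMul a (mp.prodMul b c) := by
  simp only [prodMul, Prod.mk.injEq]
  constructor
  · rw [mp.act_compat, ← mp.act_mul, mul_assoc]
  · rw [mp.coact_compat, mp.coact_mul, mul_assoc]

theorem one_prodMul (a : G × H) : mp.prodMul (1, 1) a = a := by
  simp [prodMul, mp.act_one, mp.coact_one_left]

theorem prodMul_one (a : G × H) : mp.prodMul a (1, 1) = a := by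
  simp [prodMul, mp.act_one_right, mp.coact_one]

theorem prodInv_prodMul (a : G × H) : mp.prodMul (mp.prodInv a) a = (1, 1) := by
  obtain ⟨g, h⟩ := a
  simp only [prodMul, prodInv, Prod.mk.injEq]
  constructor
  · rw [← mp.act_compat, inv_mul_cancel, mp.act_one_right]
  · rw [← mp.coact_mul, inv_mul_cancel, mp.coact_one, inv_mul_cancel]

theorem prodMul_prodInv (a : G × H) : mp.prodMul a (mp.prodInv a) = (1, 1) := by
  obtain ⟨g, h⟩ := a
  simp only [prodMul, prodInv, Prod.mk.injEq]
  constructor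
  · rw [← mp.act_mul, mul_inv_cancel, mp.act_one, mul_inv_cancel]
  · rw [← mp.coact_compat, mul_inv_cancel, mp.coact_one_left]

end MatchedPair

/-- The set `G × H` with the matched pair multiplication
`(g₁,h₁)(g₂,h₂) = (g₁(h₁ ▷ g₂), (h₁ ◁ g₂)h₂)` is a group with identity `(1,1)`
and inverse `(g,h)⁻¹ = (h⁻¹ ▷ g⁻¹, h⁻¹ ◁ g⁻¹)`. -/
theorem matchedPair_group (G H : Type*) [Group G] [Group H] (mp : MatchedPair G H) :
    let mul : G × H → G × H → G × H :=
      fun p q => (p.1 * mp.act p.2 q.1, mp.coact p.2 q.1 * q.2)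
    let one : G × H := (1, 1)
    let inv : G × H → G × H := fun p => (mp.act p.2⁻¹ p.1⁻¹, mp.coact p.2⁻¹ p.1⁻¹)
    (∀ a b c : G × H, mul (mul a b) c = mul a (mul b c)) ∧
    (∀ a : G × H, mul one a = a) ∧
    (∀ a : G × H, mul a one = a) ∧
    (∀ a : G × H, mul (inv a) a = one) ∧
    (∀ a : G × H, mul a (inv a) = one) :=
  ⟨mp.prodMul_assoc, mp.one_prodMul, mp.prodMul_one, mp.prodInv_prodMul, mp.prodMul_prodInv⟩
end

section
/- Let 𝔤 and 𝔥 be Lie algebras over a field k equipped with a matched pair structure (▷, ◁). Then the bracket [(ξ₁,η₁),(ξ₂,η₂)] = ([ξ₁,ξ₂] + η₁ ▷ ξ₂ − η₂ ▷ ξ₁, [η₁,η₂] + η₁ ◁ ξ₂ − η₂ ◁ ξ₁) makes the product vector space 𝔤 × 𝔥 into a Lie algebra over k (the bracket is bilinear, alternating, and satisfies the Jacobi identity). -/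
/-- A matched pair structure on a pair of Lie algebras `𝔤 = L`, `𝔥 = L'` over a
field `k`: bilinear maps `act = ▷ : 𝔥 × 𝔤 → 𝔤` and `coact = ◁ : 𝔥 × 𝔤 → 𝔥`
satisfying the matched pair compatibility conditions. -/
structure LieMatchedPair (k L L' : Type*) [Field k]
    [LieRing L] [LieAlgebra k L] [LieRing L'] [LieAlgebra k L'] where
  act : L' →ₗ[k] L →ₗ[k] L
  coact : L' →ₗ[k] L →ₗ[k] L'
  act_bracket : ∀ (η₁ η₂ : L') (ξ : L),
    act ⁅η₁, η₂⁆ ξ = act η₁ (act η₂ ξ) - act η₂ (act η₁ ξ)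
  coact_bracket : ∀ (η : L') (ξ₁ ξ₂ : L),
    coact η ⁅ξ₁, ξ₂⁆ = coact (coact η ξ₁) ξ₂ - coact (coact η ξ₂) ξ₁
  act_compat : ∀ (η : L') (ξ₁ ξ₂ : L),
    act η ⁅ξ₁, ξ₂⁆ = ⁅act η ξ₁, ξ₂⁆ + ⁅ξ₁, act η ξ₂⁆
      + act (coact η ξ₁) ξ₂ - act (coact η ξ₂) ξ₁
  coact_compat : ∀ (η₁ η₂ : L') (ξ : L),
    coact ⁅η₁, η₂⁆ ξ = ⁅η₁, coact η₂ ξ⁆ + ⁅coact η₁ ξ, η₂⁆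
      + coact η₁ (act η₂ ξ) - coact η₂ (act η₁ ξ)

/-!
The Jacobiator splits into components. After expanding with the matched pair axioms, the
`𝔤`-component involves only `act_bracket` and `act_compat`, the `𝔥`-component only
`coact_bracket` and `coact_compat`; in each, what is left is the Jacobi identity of `𝔤`
(resp. `𝔥`) plus mixed terms that cancel in pairs by antisymmetry.
-/

namespace LieMatchedPair

variable {k L L' : Type*} [Field k] [LieRing L] [LieAlgebra k L] [LieRing L'] [LieAlgebra k L']
  (mp : LieMatchedPair k L L')

def bracket (p q : L × L') : L × L' :=
  (⁅p.1, q.1⁆ + mp.act p.2 q.1 - mp.act q.2 p.1,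
   ⁅p.2, q.2⁆ + mp.coact p.2 q.1 - mp.coact q.2 p.1)

theorem bracket_smul_add_left (a : k) (p q r : L × L') :
    mp.bracket (a • p + q) r = a • mp.bracket p r + mp.bracket q r := by
  simp only [bracket, Prod.ext_iff, Prod.fst_add, Prod.snd_add, Prod.smul_fst, Prod.smul_snd,
    map_add, map_smul, LinearMap.add_apply, LinearMap.smul_apply, add_lie, smul_lie, smul_add,
    smul_sub]
  constructor <;> abel

theorem bracket_smul_add_right (a : k) (p q r : L × L') :
    mp.bracket p (a • q + r) = a • mp.bracket p q + mp.bracket p r := by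
  simp only [bracket, Prod.ext_iff, Prod.fst_add, Prod.snd_add, Prod.smul_fst, Prod.smul_snd,
    map_add, map_smul, LinearMap.add_apply, LinearMap.smul_apply, lie_add, lie_smul, smul_add,
    smul_sub]
  constructor <;> abel

theorem bracket_self (p : L × L') : mp.bracket p p = 0 := by
  simp [bracket]

theorem bracket_jacobi_fst (p q r : L × L') :
    (mp.bracket p (mp.bracket q r)).1 + (mp.bracket q (mp.bracket r p)).1
      + (mp.bracket r (mp.bracket p q)).1 = 0 := by
  obtain ⟨x, a⟩ := p; obtain ⟨y, b⟩ := q; obtain ⟨z, c⟩ := r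
  simp only [bracket, map_add, map_sub, LinearMap.add_apply, LinearMap.sub_apply, lie_add, lie_sub,
    mp.act_bracket, mp.act_compat]
  linear_combination (norm := abel) lie_jacobi x y z - lie_skew z (mp.act a y)
    - lie_skew x (mp.act b z) - lie_skew y (mp.act c x)

theorem bracket_jacobi_snd (p q r : L × L') :
    (mp.bracket p (mp.bracket q r)).2 + (mp.bracket q (mp.bracket r p)).2
      + (mp.bracket r (mp.bracket p q)).2 = 0 := by
  obtain ⟨x, a⟩ := p; obtain ⟨y, b⟩ := q; obtain ⟨z, c⟩ := r
  simp only [bracket, map_add, map_sub, LinearMap.add_apply, LinearMap.sub_apply, lie_add, lie_sub,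
    mp.coact_bracket, mp.coact_compat]
  linear_combination (norm := abel) lie_jacobi a b c + lie_skew a (mp.coact c y)
    + lie_skew b (mp.coact a z) + lie_skew c (mp.coact b x)

theorem bracket_jacobi (p q r : L × L') :
    mp.bracket p (mp.bracket q r) + mp.bracket q (mp.bracket r p)
      + mp.bracket r (mp.bracket p q) = 0 :=
  Prod.ext (mp.bracket_jacobi_fst p q r) (mp.bracket_jacobi_snd p q r)

end LieMatchedPair

/-- The matched pair bracket
`[(ξ₁,η₁),(ξ₂,η₂)] = ([ξ₁,ξ₂] + η₁ ▷ ξ₂ − η₂ ▷ ξ₁, [η₁,η₂] + η₁ ◁ ξ₂ − η₂ ◁ ξ₁)`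
makes `𝔤 × 𝔥` a Lie algebra over `k`: it is bilinear, alternating, and
satisfies the Jacobi identity. -/
theorem lieMatchedPair_bracket_is_lie_algebra (k L L' : Type*) [Field k]
    [LieRing L] [LieAlgebra k L] [LieRing L'] [LieAlgebra k L']
    (mp : LieMatchedPair k L L') :
    let B : L × L' → L × L' → L × L' := fun p q =>
      (⁅p.1, q.1⁆ + mp.act p.2 q.1 - mp.act q.2 p.1,
       ⁅p.2, q.2⁆ + mp.coact p.2 q.1 - mp.coact q.2 p.1)
    -- bilinearity
    (∀ (a : k) (p q r : L × L'), B (a • p + q) r = a • B p r + B q r) ∧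
    (∀ (a : k) (p q r : L × L'), B p (a • q + r) = a • B p q + B p r) ∧
    -- alternating
    (∀ p : L × L', B p p = 0) ∧
    -- Jacobi identity
    (∀ p q r : L × L', B p (B q r) + B q (B r p) + B r (B p q) = 0) :=
  ⟨mp.bracket_smul_add_left, mp.bracket_smul_add_right, mp.bracket_self, mp.bracket_jacobi⟩
end

section
/- The map ψ : S → SL(2,ℂ) defined by ψ(a,b,c) = (1/√(1+c))·[[1+c, 0],[a+ib, 1]] is an injective group homomorphism from the group (S,*) into SL(2,ℂ): ψ(x * y) = ψ(x)·ψ(y) for all x,y ∈ S, and ψ(x) = ψ(y) implies x = y. Its image is exactly the set K of lower triangular matrices in SL(2,ℂ) whose (0,0)-entry is a positive real number. -/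
/-!
Writing `s = √(1+c)` and `z = a + ib`, the matrix `ψ(a,b,c)` is `[[s, 0], [z/s, 1/s]]`.
Such matrices multiply by `(s, z) · (t, w) = (st, t²z + w)`, and `t² = 1 + c'` turns this
into the multiplication of `S`. Conversely a lower triangular matrix of determinant one is
`[[s, 0], [z/s, 1/s]]` with `s = B₀₀` and `z = B₀₀ B₁₀`, so positivity of `B₀₀` is exactly
what is needed to recover `c = s² - 1 > -1`.
-/

open Matrix Complex

section LowerTri

variable {K : Type*} [Field K]

def lowerTri (s z : K) : Matrix (Fin 2) (Fin 2) K :=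
  !![s, 0; z / s, s⁻¹]

@[simp]
lemma lowerTri_apply_zero_zero (s z : K) : lowerTri s z 0 0 = s := rfl

@[simp]
lemma lowerTri_apply_zero_one (s z : K) : lowerTri s z 0 1 = 0 := rfl

lemma det_lowerTri {s : K} (z : K) (hs : s ≠ 0) : (lowerTri s z).det = 1 := by
  simp [lowerTri, det_fin_two_of, hs]

lemma lowerTri_mul_lowerTri (s z w : K) {t : K} (ht : t ≠ 0) :
    lowerTri s z * lowerTri t w = lowerTri (s * t) (t ^ 2 * z + w) := by
  ext i j
  fin_cases i <;> fin_cases j <;> simp [lowerTri] <;> field_simp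

lemma lowerTri_inj {s t z w : K} (hs : s ≠ 0) :
    lowerTri s z = lowerTri t w ↔ s = t ∧ z = w := by
  refine ⟨fun h => ?_, by rintro ⟨rfl, rfl⟩; rfl⟩
  have hst : s = t := congr_fun (congr_fun h 0) 0
  subst hst
  have hzw : z / s = w / s := congr_fun (congr_fun h 1) 0
  exact ⟨rfl, (div_left_inj' hs).mp hzw⟩

lemma eq_lowerTri_of_det_eq_one {B : Matrix (Fin 2) (Fin 2) K} (h01 : B 0 1 = 0)
    (hdet : B.det = 1) : B = lowerTri (B 0 0) (B 0 0 * B 1 0) := by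
  rw [det_fin_two, h01, zero_mul, sub_zero] at hdet
  have h00 : B 0 0 ≠ 0 := left_ne_zero_of_mul_eq_one hdet
  have h11 : B 1 1 = (B 0 0)⁻¹ := eq_inv_of_mul_eq_one_right hdet
  ext i j
  fin_cases i <;> fin_cases j <;> simp [lowerTri, h01, h11, h00]

end LowerTri

section SqrtCoordinate

variable {c d : ℝ}

lemma ofReal_sqrt_one_add_ne_zero (hc : -1 < c) : (√(1 + c) : ℂ) ≠ 0 :=
  ofReal_ne_zero.mpr (Real.sqrt_pos.mpr (by linarith)).ne'

lemma smul_eq_lowerTri (hc : -1 < c) (z : ℂ) :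
    ((1 / √(1 + c) : ℝ) : ℂ) • !![((1 + c : ℝ) : ℂ), 0; z, 1] = lowerTri (√(1 + c) : ℂ) z := by
  have hsq : ((1 + c : ℝ) : ℂ) = (√(1 + c) : ℂ) ^ 2 := by
    rw [← ofReal_pow, Real.sq_sqrt (by linarith)]
  have hne := ofReal_sqrt_one_add_ne_zero hc
  ext i j
  fin_cases i <;> fin_cases j <;> simp [lowerTri, hsq, div_eq_inv_mul]
  all_goals field_simp

lemma lowerTri_sqrt_mul_lowerTri_sqrt (hc : -1 < c) (hd : -1 < d) (z w : ℂ) :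
    lowerTri (√(1 + c) : ℂ) z * lowerTri (√(1 + d) : ℂ) w =
      lowerTri (√(1 + ((1 + d) * c + d)) : ℂ) ((1 + d) * z + w) := by
  rw [lowerTri_mul_lowerTri _ _ _ (ofReal_sqrt_one_add_ne_zero hd), ← ofReal_mul,
    ← Real.sqrt_mul (by linarith), ← ofReal_pow, Real.sq_sqrt (by linarith)]
  congr 3
  · ring
  · push_cast
    ring

end SqrtCoordinate

/-- The map `ψ(a,b,c) = (1/√(1+c)) • [[1+c, 0],[a+ib, 1]]` is an injective
group homomorphism from `(S, *)` into `SL(2,ℂ)`, whose image is exactly the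
set of lower triangular matrices in `SL(2,ℂ)` with positive real
`(0,0)`-entry. -/
theorem psi_injective_hom :
    let S : Set (ℝ × ℝ × ℝ) := {v | -1 < v.2.2}
    let mul : ℝ × ℝ × ℝ → ℝ × ℝ × ℝ → ℝ × ℝ × ℝ := fun v w => (1 + w.2.2) • v + w
    let ψ : ℝ × ℝ × ℝ → Matrix (Fin 2) (Fin 2) ℂ := fun v =>
      (((1 / Real.sqrt (1 + v.2.2) : ℝ) : ℂ)) •
        !![((1 + v.2.2 : ℝ) : ℂ), 0; (v.1 : ℂ) + (v.2.1 : ℂ) * I, 1]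
    -- ψ maps into SL(2,ℂ)
    (∀ v ∈ S, (ψ v).det = 1) ∧
    -- ψ is multiplicative
    (∀ v ∈ S, ∀ w ∈ S, ψ (mul v w) = ψ v * ψ w) ∧
    -- ψ is injective
    (∀ v ∈ S, ∀ w ∈ S, ψ v = ψ w → v = w) ∧
    -- the image of ψ is exactly K
    (∀ B : Matrix (Fin 2) (Fin 2) ℂ,
      (∃ v ∈ S, ψ v = B) ↔ (B 0 1 = 0 ∧ B.det = 1 ∧ ∃ r : ℝ, 0 < r ∧ B 0 0 = (r : ℂ))) := by
  intro S mul ψ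
  have hψ (v : ℝ × ℝ × ℝ) (hv : -1 < v.2.2) :
      ψ v = lowerTri (√(1 + v.2.2) : ℂ) ⟨v.1, v.2.1⟩ := by
    rw [mk_eq_add_mul_I]
    exact smul_eq_lowerTri hv _
  refine ⟨fun v hv => hψ v hv ▸ det_lowerTri _ (ofReal_sqrt_one_add_ne_zero hv), ?_, ?_,
    fun B => ⟨?_, ?_⟩⟩
  · intro v (hv : -1 < v.2.2) w (hw : -1 < w.2.2)
    rw [hψ _ (by simp only [mul, Prod.snd_add, Prod.smul_snd, smul_eq_mul]; nlinarith), hψ v hv,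
      hψ w hw, lowerTri_sqrt_mul_lowerTri_sqrt hv hw]
    congr 2 <;> simp [mul]
  · intro v (hv : -1 < v.2.2) w (hw : -1 < w.2.2) h
    rw [hψ v hv, hψ w hw, lowerTri_inj (ofReal_sqrt_one_add_ne_zero hv), ofReal_inj,
      Real.sqrt_inj (by linarith) (by linarith), Complex.mk.injEq] at h
    exact Prod.ext h.2.1 (Prod.ext h.2.2 (by linarith [h.1]))
  · rintro ⟨v, hv : -1 < v.2.2, rfl⟩
    rw [hψ v hv]
    exact ⟨rfl, det_lowerTri _ (ofReal_sqrt_one_add_ne_zero hv), _, Real.sqrt_pos.mpr (by linarith),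
      rfl⟩
  · rintro ⟨h01, hdet, r, hr, h00⟩
    have hmem : -1 < r ^ 2 - 1 := by nlinarith
    refine ⟨((r * B 1 0).re, (r * B 1 0).im, r ^ 2 - 1), hmem, ?_⟩
    rw [hψ _ hmem, Complex.eta]
    conv_rhs => rw [eq_lowerTri_of_det_eq_one h01 hdet, h00]
    simp only [add_sub_cancel, Real.sqrt_sq hr.le]
end

section
/- Define φ_K : ℝ³ → M₂(ℂ) by φ_K(a,b,c) = [[c/2, 0],[a+ib, −c/2]]. Then for all Y₁, Y₂ ∈ ℝ³, φ_K(k × (Y₁ × Y₂)) = φ_K(Y₁)·φ_K(Y₂) − φ_K(Y₂)·φ_K(Y₁); that is, φ_K is an (injective, real-linear) Lie algebra homomorphism from ℝ³ with the bracket [Y₁,Y₂] = k × (Y₁ × Y₂) into the 2×2 complex matrices with the commutator bracket. -/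
open Matrix Complex

/- Writing `φ_K(Y) = (c/2) H + (a + i b) E` with `H = diag(1, -1)` and `E` the lower matrix unit,
`[H, E] = -2E` gives `[φ_K Y₁, φ_K Y₂] = c₂ φ_K Y₁ - c₁ φ_K Y₂`, while the triple product
expansion gives `k × (Y₁ × Y₂) = c₂ Y₁ - c₁ Y₂`; linearity of `φ_K` matches the two. -/

theorem vec3_dotProduct_k {R : Type*} [CommRing R] (w : Fin 3 → R) : ![0, 0, 1] ⬝ᵥ w = w 2 := by
  simp [dotProduct, Fin.sum_univ_three]

theorem k_cross_cross {R : Type*} [CommRing R] (v w : Fin 3 → R) :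
    ![0, 0, 1] ⨯₃ (v ⨯₃ w) = w 2 • v - v 2 • w := by
  rw [cross_cross_eq_smul_sub_smul', vec3_dotProduct_k, dotProduct_comm, vec3_dotProduct_k]

noncomputable def phiK : (Fin 3 → ℝ) →ₗ[ℝ] Matrix (Fin 2) (Fin 2) ℂ where
  toFun Y := !![((Y 2 : ℝ) : ℂ) / 2, 0; (Y 0 : ℂ) + (Y 1 : ℂ) * I, -((Y 2 : ℝ) : ℂ) / 2]
  map_add' Y Z := by
    ext i j
    fin_cases i <;> fin_cases j <;> simp <;> ring
  map_smul' a Y := by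
    ext i j
    fin_cases i <;> fin_cases j <;> simp <;> ring

theorem phiK_apply (Y : Fin 3 → ℝ) :
    phiK Y = !![((Y 2 : ℝ) : ℂ) / 2, 0; (Y 0 : ℂ) + (Y 1 : ℂ) * I, -((Y 2 : ℝ) : ℂ) / 2] :=
  rfl

theorem phiK_injective : Function.Injective phiK := by
  refine (injective_iff_map_eq_zero phiK).mpr fun Y hY => ?_
  have h00 := congrFun (congrFun hY 0) 0
  have h10 := congrFun (congrFun hY 1) 0
  simp [phiK_apply, Complex.ext_iff] at h00 h10
  ext i
  fin_cases i <;> simp_all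

theorem phiK_commutator (Y₁ Y₂ : Fin 3 → ℝ) :
    phiK Y₁ * phiK Y₂ - phiK Y₂ * phiK Y₁ = Y₂ 2 • phiK Y₁ - Y₁ 2 • phiK Y₂ := by
  ext i j
  fin_cases i <;> fin_cases j <;> simp [phiK_apply] <;> ring

/-- The map `φ_K(a,b,c) = [[c/2, 0],[a+ib, -c/2]]` is an injective real-linear
Lie algebra homomorphism from `ℝ³` with the bracket `[Y₁,Y₂] = k × (Y₁ × Y₂)`
into the `2×2` complex matrices with the commutator bracket. -/
theorem phiK_lie_hom :
    let cross : (Fin 3 → ℝ) → (Fin 3 → ℝ) → (Fin 3 → ℝ) := fun v w => crossProduct v w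
    let kvec : Fin 3 → ℝ := ![0, 0, 1]
    let φK : (Fin 3 → ℝ) → Matrix (Fin 2) (Fin 2) ℂ := fun Y =>
      !![((Y 2 : ℝ) : ℂ) / 2, 0; (Y 0 : ℂ) + (Y 1 : ℂ) * I, -((Y 2 : ℝ) : ℂ) / 2]
    -- Lie algebra homomorphism property
    (∀ Y₁ Y₂ : Fin 3 → ℝ,
      φK (cross kvec (cross Y₁ Y₂)) = φK Y₁ * φK Y₂ - φK Y₂ * φK Y₁) ∧
    -- injectivity
    Function.Injective φK ∧
    -- real-linearity
    (∀ Y₁ Y₂ : Fin 3 → ℝ, φK (Y₁ + Y₂) = φK Y₁ + φK Y₂) ∧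
    (∀ (a : ℝ) (Y : Fin 3 → ℝ), φK (a • Y) = a • φK Y) := by
  intro cross kvec φK
  refine ⟨fun Y₁ Y₂ => ?_, phiK_injective, map_add phiK, map_smul phiK⟩
  change phiK (kvec ⨯₃ (Y₁ ⨯₃ Y₂)) = phiK Y₁ * phiK Y₂ - phiK Y₂ * phiK Y₁
  rw [k_cross_cross, map_sub, map_smul, map_smul, phiK_commutator]
end

section
/- Let φ_su(r,s,t) = r·e₁ + s·e₂ + t·e₃ with e₁ = [[0, −i/2],[−i/2, 0]], e₂ = [[0, −1/2],[1/2, 0]], e₃ = [[−i/2, 0],[0, i/2]], and let φ_K(a,b,c) = [[c/2, 0],[a+ib, −c/2]]. Then for all X, Y ∈ ℝ³ the matrix commutator decomposes as φ_K(Y)·φ_su(X) − φ_su(X)·φ_K(Y) = φ_su(Y × (X × k)) + φ_K(Y × X); i.e. the 𝔰𝔲(2)-component of [φ_K(Y), φ_su(X)] corresponds to Y ▷ X = Y × (X × k) and the 𝔎-component corresponds to Y ◁ X = Y × X. -/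
/-!
`φ_su(X)` is a traceless matrix and `φ_K(Y)` a traceless lower triangular one; the commutator of
two such `2 × 2` matrices has a closed form over any commutative ring, and its entries match those
of `φ_su(Y × (X × k)) + φ_K(Y × X)` coordinatewise.
-/

open Matrix Complex

theorem Matrix.commutator_fin_two_lowerTriangular_traceless {R : Type*} [CommRing R]
    (c w p q r : R) :
    !![c, 0; w, -c] * !![p, q; r, -p] - !![p, q; r, -p] * !![c, 0; w, -c] =
      !![-(q * w), 2 * c * q; 2 * (p * w - c * r), q * w] := by
  ext i j
  fin_cases i <;> fin_cases j <;> simp <;> ring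

theorem su2_basis_combination_eq (r s t : ℝ) :
    r • !![0, -I/2; -I/2, 0] + s • !![0, -(1:ℂ)/2; (1:ℂ)/2, 0] + t • !![-I/2, 0; 0, I/2] =
      !![-(t * I / 2), -((r * I + s) / 2); (s - r * I) / 2, -(-(t * I / 2))] := by
  ext i j
  fin_cases i <;> fin_cases j <;> simp [Complex.real_smul] <;> ring

/-- The commutator of `φ_K(Y)` and `φ_su(X)` decomposes as
`[φ_K(Y), φ_su(X)] = φ_su(Y × (X × k)) + φ_K(Y × X)`, i.e. the `𝔰𝔲(2)`-component
of the commutator is `Y ▷ X = Y × (X × k)` and the `𝔎`-component is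
`Y ◁ X = Y × X`. -/
theorem commutator_decomposition :
    let cross : (Fin 3 → ℝ) → (Fin 3 → ℝ) → (Fin 3 → ℝ) := fun v w => crossProduct v w
    let kvec : Fin 3 → ℝ := ![0, 0, 1]
    let e₁ : Matrix (Fin 2) (Fin 2) ℂ := !![0, -I/2; -I/2, 0]
    let e₂ : Matrix (Fin 2) (Fin 2) ℂ := !![0, -(1:ℂ)/2; (1:ℂ)/2, 0]
    let e₃ : Matrix (Fin 2) (Fin 2) ℂ := !![-I/2, 0; 0, I/2]
    let φsu : (Fin 3 → ℝ) → Matrix (Fin 2) (Fin 2) ℂ := fun X =>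
      X 0 • e₁ + X 1 • e₂ + X 2 • e₃
    let φK : (Fin 3 → ℝ) → Matrix (Fin 2) (Fin 2) ℂ := fun Y =>
      !![((Y 2 : ℝ) : ℂ) / 2, 0; (Y 0 : ℂ) + (Y 1 : ℂ) * I, -((Y 2 : ℝ) : ℂ) / 2]
    ∀ X Y : Fin 3 → ℝ,
      φK Y * φsu X - φsu X * φK Y =
        φsu (cross Y (cross X kvec)) + φK (cross Y X) := by
  intro cross kvec e₁ e₂ e₃ φsu φK X Y
  simp only [φsu, e₁, e₂, e₃, su2_basis_combination_eq]
  simp only [φK, neg_div]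
  rw [commutator_fin_two_lowerTriangular_traceless]
  simp only [cross, kvec, cross_apply]
  ext i j
  fin_cases i <;> fin_cases j <;> simp [Complex.ext_iff] <;> constructor <;> ring
end

section
/- On ℝ³, define the brackets [X₁,X₂]_𝔤 = X₁ × X₂ and [Y₁,Y₂]_𝔥 = k × (Y₁ × Y₂), and the maps Y ▷ X = Y × (X × k) and Y ◁ X = Y × X. Then (▷, ◁) is a matched pair structure on ((ℝ³, ×), (ℝ³, k × (· × ·))): for all X, X₁, X₂, Y, Y₁, Y₂ ∈ ℝ³, (i) (k × (Y₁ × Y₂)) × (X × k) = Y₁ × ((Y₂ × (X × k)) × k) − Y₂ × ((Y₁ × (X × k)) × k); (ii) Y × (X₁ × X₂) = (Y × X₁) × X₂ − (Y × X₂) × X₁; (iii) Y × ((X₁ × X₂) × k) = (Y × (X₁ × k)) × X₂ + X₁ × (Y × (X₂ × k)) + (Y × X₁) × (X₂ × k) − (Y × X₂) × (X₁ × k); (iv) (k × (Y₁ × Y₂)) × X = k × (Y₁ × (Y₂ × X)) + k × ((Y₁ × X) × Y₂) + Y₁ × (Y₂ × (X × k)) − Y₂ × (Y₁ × (X × k)).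 -/
/-!
Write `Y ▷ X = ⁅Y, ⁅X, k⁆⁆`, `Y ◁ X = ⁅Y, X⁆` and `[Y₁, Y₂]_𝔥 = ⁅k, ⁅Y₁, Y₂⁆⁆` in any Lie ring.
Conditions (ii)–(iv) are then consequences of the Jacobi identity alone, valid for every `k`.
Only (i) uses the geometry of `ℝ³`: by the triple product expansion
`Y ▷ X = (Y ⬝ᵥ k) • X - (X ⬝ᵥ Y) • k`, and the bracket `k ⨯₃ (Y₁ ⨯₃ Y₂)` is orthogonal to `k`,
so both sides of (i) reduce to the same combination of `X` and `k`.
-/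

open Matrix

namespace LieRing

variable {L : Type*} [LieRing L]

theorem lie_lie_eq_lie_lie_add_lie_lie (x y z : L) :
    ⁅⁅x, y⁆, z⁆ = ⁅x, ⁅y, z⁆⁆ + ⁅⁅x, z⁆, y⁆ := by
  rw [lie_lie, sub_eq_add_neg, lie_skew]

theorem lie_lie_eq_lie_lie_sub_lie_lie (x y z : L) :
    ⁅x, ⁅y, z⁆⁆ = ⁅⁅x, y⁆, z⁆ - ⁅⁅x, z⁆, y⁆ := by
  rw [leibniz_lie, ← lie_skew ⁅x, z⁆, sub_neg_eq_add]

def kAct (k Y X : L) : L := ⁅Y, ⁅X, k⁆⁆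

def kBracket (k Y₁ Y₂ : L) : L := ⁅k, ⁅Y₁, Y₂⁆⁆

variable (k : L)

theorem kAct_lie (Y X₁ X₂ : L) :
    kAct k Y ⁅X₁, X₂⁆ = ⁅kAct k Y X₁, X₂⁆ + ⁅X₁, kAct k Y X₂⁆ + kAct k ⁅Y, X₁⁆ X₂
      - kAct k ⁅Y, X₂⁆ X₁ := by
  unfold kAct
  rw [lie_lie_eq_lie_lie_add_lie_lie, lie_add, leibniz_lie Y X₁, leibniz_lie Y ⁅X₁, k⁆,
    ← lie_skew ⁅Y, X₂⁆]
  abel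

theorem kBracket_lie (Y₁ Y₂ X : L) :
    ⁅kBracket k Y₁ Y₂, X⁆ = kBracket k Y₁ ⁅Y₂, X⁆ + kBracket k ⁅Y₁, X⁆ Y₂
      + ⁅Y₁, kAct k Y₂ X⁆ - ⁅Y₂, kAct k Y₁ X⁆ := by
  unfold kAct kBracket
  rw [lie_lie k, lie_lie_eq_lie_lie_add_lie_lie Y₁, lie_add, lie_lie Y₁ Y₂ ⁅k, X⁆,
    ← lie_skew X k]
  simp only [lie_neg]
  abel

end LieRing

namespace Cross

attribute [local instance] Cross.lieRing

variable {R : Type*} [CommRing R]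

theorem lie_eq_cross (u v : Fin 3 → R) : ⁅u, v⁆ = u ⨯₃ v := rfl

open LieRing in
theorem kAct_kBracket (k Y₁ Y₂ X : Fin 3 → R) :
    kAct k (kBracket k Y₁ Y₂) X = kAct k Y₁ (kAct k Y₂ X) - kAct k Y₂ (kAct k Y₁ X) := by
  have h_orth : k ⨯₃ (Y₁ ⨯₃ Y₂) ⬝ᵥ k = 0 := by rw [dotProduct_comm]; exact dot_self_cross k _
  simp only [kAct, kBracket, lie_eq_cross, cross_cross_eq_smul_sub_smul' _ _ k, h_orth]
  rw [cross_cross_eq_smul_sub_smul']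
  simp only [sub_dotProduct, smul_dotProduct, smul_eq_mul, dotProduct_comm k, dotProduct_comm X]
  module

end Cross

/-- The maps `Y ▷ X = Y × (X × k)` and `Y ◁ X = Y × X` form a matched pair
structure on the Lie algebras `(ℝ³, ×)` and `(ℝ³, k × (· × ·))`: the four
matched pair compatibility conditions (i)–(iv) hold. -/
theorem su2_K_matched_pair :
    let cross : (Fin 3 → ℝ) → (Fin 3 → ℝ) → (Fin 3 → ℝ) := fun v w => crossProduct v w
    let kvec : Fin 3 → ℝ := ![0, 0, 1]
    -- (i) [Y₁,Y₂]_𝔥 ▷ X = Y₁ ▷ (Y₂ ▷ X) − Y₂ ▷ (Y₁ ▷ X)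
    (∀ X Y₁ Y₂ : Fin 3 → ℝ,
      cross (cross kvec (cross Y₁ Y₂)) (cross X kvec) =
        cross Y₁ (cross (cross Y₂ (cross X kvec)) kvec)
          - cross Y₂ (cross (cross Y₁ (cross X kvec)) kvec)) ∧
    -- (ii) Y ◁ [X₁,X₂]_𝔤 = (Y ◁ X₁) ◁ X₂ − (Y ◁ X₂) ◁ X₁
    (∀ X₁ X₂ Y : Fin 3 → ℝ,
      cross Y (cross X₁ X₂) =
        cross (cross Y X₁) X₂ - cross (cross Y X₂) X₁) ∧
    -- (iii) Y ▷ [X₁,X₂]_𝔤 = [Y ▷ X₁, X₂] + [X₁, Y ▷ X₂] + (Y ◁ X₁) ▷ X₂ − (Y ◁ X₂) ▷ X₁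
    (∀ X₁ X₂ Y : Fin 3 → ℝ,
      cross Y (cross (cross X₁ X₂) kvec) =
        cross (cross Y (cross X₁ kvec)) X₂
          + cross X₁ (cross Y (cross X₂ kvec))
          + cross (cross Y X₁) (cross X₂ kvec)
          - cross (cross Y X₂) (cross X₁ kvec)) ∧
    -- (iv) [Y₁,Y₂]_𝔥 ◁ X = [Y₁, Y₂ ◁ X] + [Y₁ ◁ X, Y₂] + Y₁ ◁ (Y₂ ▷ X) − Y₂ ◁ (Y₁ ▷ X)
    (∀ X Y₁ Y₂ : Fin 3 → ℝ,
      cross (cross kvec (cross Y₁ Y₂)) X =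
        cross kvec (cross Y₁ (cross Y₂ X))
          + cross kvec (cross (cross Y₁ X) Y₂)
          + cross Y₁ (cross Y₂ (cross X kvec))
          - cross Y₂ (cross Y₁ (cross X kvec))) := by
  intro cross kvec
  let _ : LieRing (Fin 3 → ℝ) := Cross.lieRing
  exact ⟨fun X Y₁ Y₂ => Cross.kAct_kBracket kvec Y₁ Y₂ X,
    fun X₁ X₂ Y => LieRing.lie_lie_eq_lie_lie_sub_lie_lie Y X₁ X₂,
    fun X₁ X₂ Y => LieRing.kAct_lie kvec Y X₁ X₂,
    fun X Y₁ Y₂ => LieRing.kBracket_lie kvec Y₁ Y₂ X⟩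
end
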